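/- arXiv:1804.11066 — 2 statements merged into one kernel-verified Lean document; each statement's English description precedes it below -/
import Mathlib

section
/- Let W be a Heyting frame. For X ⊆ W and Y ∈ Gal(W), define X → Y := {y ∈ W : ∀x ∈ X, x ∘ y ∈ Y}. Then X → Y is Galois-closed; in fact X → Y = (X ⇒ Y^▷)^◁, where X ⇒ Y^▷ := {x ⇒ z : x ∈ X, z ∈ Y^▷}. -/
def polR {α β : Type*} (R : α → β → Prop) (X : Set α) : Set β :=
  {z | ∀ x ∈ X, R x z}

def polL {α β : Type*} (R : α → β → Prop) (Z : Set β) : Set α :=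
  {x | ∀ z ∈ Z, R x z}

def gal {α β : Type*} (R : α → β → Prop) (X : Set α) : Set α :=
  polL R (polR R X)

/-- A Heyting frame `⟨W, W', R, ∘, ε, ⇒⟩`: a polarity together with a monoid
structure on `W` and a residuation map `⇒ : W × W' → W'`, validating the
structural rules of exchange, weakening and contraction. -/
structure HeytingFrame (α β : Type*) where
  R : α → β → Prop
  op : α → α → α
  eps : α
  imp : α → β → β
  op_assoc : ∀ x y z, op (op x y) z = op x (op y z)
  eps_op : ∀ x, op eps x = x
  op_eps : ∀ x, op x eps = x
  resid : ∀ x y z, R (op x y) z ↔ R y (imp x z)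
  rule_e : ∀ x y z, R (op x y) z → R (op y x) z
  rule_w : ∀ x z, R eps z → R x z
  rule_c : ∀ x z, R (op x x) z → R x z

-- `polR R` and `polL R` are definitionally Mathlib's `upperPolar R` and `lowerPolar R`.
theorem gal_polL {α β : Type*} (R : α → β → Prop) (Z : Set β) :
    gal R (polL R Z) = polL R Z :=
  lowerPolar_upperPolar_lowerPolar R Z

namespace HeytingFrame

variable {α β : Type*} (H : HeytingFrame α β)

theorem op_mem_gal_iff {x y : α} {Y : Set α} :
    H.op x y ∈ gal H.R Y ↔ ∀ w ∈ polR H.R Y, H.R y (H.imp x w) :=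
  forall₂_congr fun w _ => H.resid x y w

theorem setOf_forall_op_mem_gal (X Y : Set α) :
    {y | ∀ x ∈ X, H.op x y ∈ gal H.R Y} = polL H.R (Set.image2 H.imp X (polR H.R Y)) := by
  ext y
  simp only [Set.mem_ofPred_eq, op_mem_gal_iff, polL, Set.forall_mem_image2]

end HeytingFrame

/-- For `X ⊆ W` and Galois-closed `Y`, the set
`X → Y = {y : ∀ x ∈ X, x ∘ y ∈ Y}` is Galois-closed; in fact it equals
`(X ⇒ Y^▷)^◁` where `X ⇒ Y^▷ = {x ⇒ z : x ∈ X, z ∈ Y^▷}`. -/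
theorem stmt_9 {α β : Type*} (H : HeytingFrame α β) (X Y : Set α)
    (hY : Y = gal H.R Y) :
    {y : α | ∀ x ∈ X, H.op x y ∈ Y} = gal H.R {y : α | ∀ x ∈ X, H.op x y ∈ Y} ∧
    {y : α | ∀ x ∈ X, H.op x y ∈ Y} =
      polL H.R {z : β | ∃ x ∈ X, ∃ w ∈ polR H.R Y, z = H.imp x w} := by
  have hImp : {z : β | ∃ x ∈ X, ∃ w ∈ polR H.R Y, z = H.imp x w} =
      Set.image2 H.imp X (polR H.R Y) := by
    simp only [Set.image2, eq_comm]
  have hArrow := H.setOf_forall_op_mem_gal X Y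
  rw [← hY, ← hImp] at hArrow
  refine ⟨?_, hArrow⟩
  rw [hArrow, gal_polL]
end

section
/- Let A be a Heyting algebra and W_A = ⟨A, A, ≤, ∧, ⊤, →⟩ the associated Heyting frame. The map γ : A → Gal(W_A), a ↦ {a}^▷◁, is a Heyting algebra embedding: a ≤ b iff γ(a) ⊆ γ(b), and γ preserves ⊥, ∧, ∨, and →, where Gal(W_A) carries the Heyting algebra structure with intersection as meet, closure of union as join, and X → Y = {y : ∀x ∈ X, x ∧ y ∈ Y}. -/
/-! The closure of a singleton `{a}` is the principal down-set `Iic a`, so each clause reduces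
to a fact about principal down-sets of `A`; for `→` this is the adjunction
`x ⊓ y ≤ b ↔ y ≤ x ⇨ b`. -/

/-- The Galois closure `γ(X) = X^▷◁` in the frame `W_A = ⟨A, A, ≤, ∧, ⊤, →⟩`:
lower bounds of the upper bounds. -/
def cl {A : Type*} [HeytingAlgebra A] (X : Set A) : Set A :=
  lowerBounds (upperBounds X)

open Set

theorem Set.Iic_himp {A : Type*} [GeneralizedHeytingAlgebra A] (a b : A) :
    Iic (a ⇨ b) = {y | ∀ x ∈ Iic a, x ⊓ y ∈ Iic b} := by
  ext y
  simp only [mem_Iic, mem_ofPred_eq]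
  refine ⟨fun hy x hx => (inf_le_inf hx hy).trans inf_himp_le, fun h => ?_⟩
  exact le_himp_iff'.2 (h a le_rfl)

section Closure

variable {A : Type*} [HeytingAlgebra A]

theorem cl_singleton (a : A) : cl {a} = Iic a := by
  rw [cl, upperBounds_singleton, lowerBounds_Ici]

theorem cl_empty : cl (∅ : Set A) = Iic ⊥ := by
  rw [cl, upperBounds_empty, OrderBot.lowerBounds_univ, Iic_bot]

theorem cl_Iic_union_Iic (a b : A) : cl (Iic a ∪ Iic b) = Iic (a ⊔ b) := by
  rw [cl, upperBounds_union, upperBounds_Iic, upperBounds_Iic, Ici_inter_Ici, lowerBounds_Ici]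

end Closure

/-- The map `γ : A → Gal(W_A)`, `a ↦ {a}^▷◁`, is a Heyting algebra embedding:
`a ≤ b ↔ γ(a) ⊆ γ(b)`, and `γ` preserves `⊥`, `∧`, `∨` and `→`, where
`Gal(W_A)` has intersection as meet, closure of union as join, bottom `γ(∅)`
and implication `X → Y = {y : ∀ x ∈ X, x ⊓ y ∈ Y}`. -/
theorem stmt_12 {A : Type*} [HeytingAlgebra A] :
    (∀ a b : A, a ≤ b ↔ cl {a} ⊆ cl {b}) ∧
    cl {(⊥ : A)} = cl (∅ : Set A) ∧
    (∀ a b : A, cl {a ⊓ b} = cl {a} ∩ cl {b}) ∧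
    (∀ a b : A, cl {a ⊔ b} = cl (cl {a} ∪ cl {b})) ∧
    (∀ a b : A, cl {a ⇨ b} = {y : A | ∀ x ∈ cl {a}, x ⊓ y ∈ cl {b}}) := by
  refine ⟨fun a b => ?_, ?_, fun a b => ?_, fun a b => ?_, fun a b => ?_⟩ <;>
    simp only [cl_singleton]
  · exact Iic_subset_Iic.symm
  · exact cl_empty.symm
  · exact Iic_inter_Iic.symm
  · exact (cl_Iic_union_Iic a b).symm
  · exact Iic_himp a b
end
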